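/- A linear map d : A1 → A1 is a derivation of A1 if and only if d(e1) = 0 and d(e2), d(e3) ∈ span{e2, e3}; in particular the derivation algebra of A1 is 4-dimensional, spanned by the maps d1, d2, d3, d4 determined by d1(e2)=e2, d2(e3)=e3, d3(e2)=e3, d4(e3)=e2 (each vanishing on the remaining basis vectors). -/

import Mathlib

set_option linter.unreachableTactic false
set_option linter.unnecessarySeqFocus false
set_option linter.unusedTactic false

noncomputable section

/-- The underlying space of our 3-dimensional algebras. -/
abbrev V3 : Type := Fin 3 → ℂ
/-- Multiplication of the algebra `A1` (and of `S1`): in the basis `e1 = ![1,0,0]`,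
`e2 = ![0,1,0]`, `e3 = ![0,0,1]`, the element `e1` is the unit and all
products among `e2, e3` vanish. -/
def A1mul : V3 →ₗ[ℂ] V3 →ₗ[ℂ] V3 :=
  LinearMap.mk₂ ℂ (fun x y => ![x 0 * y 0, x 0 * y 1 + x 1 * y 0, x 0 * y 2 + x 2 * y 0])
    (fun x x' y => by funext k; fin_cases k <;> simp <;> ring)
    (fun a x y => by funext k; fin_cases k <;> simp <;> ring)
    (fun x y y' => by funext k; fin_cases k <;> simp <;> ring)
    (fun a x y => by funext k; fin_cases k <;> simp <;> ring)
/-- The basis vector `e1` (the unit). -/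
def e1 : V3 := ![1, 0, 0]
/-- The basis vector `e2`. -/
def e2 : V3 := ![0, 1, 0]
/-- The basis vector `e3`. -/
def e3 : V3 := ![0, 0, 1]

/-- `d : A1 → A1` is a derivation of `A1`. -/
def IsDerA1 (d : V3 →ₗ[ℂ] V3) : Prop :=
  ∀ x y, d (A1mul x y) = A1mul (d x) y + A1mul x (d y)

/-- The derivation `d1`: `d1 (e2) = e2`, vanishing on `e1` and `e3`. -/
def d1 : V3 →ₗ[ℂ] V3 := Matrix.toLin' ![![0, 0, 0], ![0, 1, 0], ![0, 0, 0]]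
/-- The derivation `d2`: `d2 (e3) = e3`, vanishing on `e1` and `e2`. -/
def d2 : V3 →ₗ[ℂ] V3 := Matrix.toLin' ![![0, 0, 0], ![0, 0, 0], ![0, 0, 1]]
/-- The derivation `d3`: `d3 (e2) = e3`, vanishing on `e1` and `e3`. -/
def d3 : V3 →ₗ[ℂ] V3 := Matrix.toLin' ![![0, 0, 0], ![0, 0, 0], ![0, 1, 0]]
/-- The derivation `d4`: `d4 (e3) = e2`, vanishing on `e1` and `e2`. -/
def d4 : V3 →ₗ[ℂ] V3 := Matrix.toLin' ![![0, 0, 0], ![0, 0, 1], ![0, 0, 0]]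


/-! Every derivation kills the unit `e1`, since `d e1 = d (e1 e1) = 2 d e1`, and preserves the
square-zero ideal `N = span {e2, e3}`: for `v ∈ N`, differentiating `v v = 0` gives
`2 (d v)₀ v = 0`, where `(d v)₀` is the `e1`-coordinate of `d v`. Conversely, a linear map with
these two properties is a combination of `d1, …, d4`, each of which is checked to be a
derivation directly; and `d1, …, d4` are independent, as their values on `e2` and `e3` show. -/

lemma A1mul_apply (x y : V3) :
    A1mul x y = ![x 0 * y 0, x 0 * y 1 + x 1 * y 0, x 0 * y 2 + x 2 * y 0] := rfl

lemma A1mul_e1_left (v : V3) : A1mul e1 v = v := by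
  funext k; fin_cases k <;> simp [A1mul_apply, e1]

lemma A1mul_e1_right (v : V3) : A1mul v e1 = v := by
  funext k; fin_cases k <;> simp [A1mul_apply, e1]

lemma eq_smul_e1_add_smul_e2_add_smul_e3 (v : V3) : v = v 0 • e1 + v 1 • e2 + v 2 • e3 := by
  funext k; fin_cases k <;> simp [e1, e2, e3]

lemma mem_span_e2_e3_iff {v : V3} : v ∈ Submodule.span ℂ {e2, e3} ↔ v 0 = 0 := by
  rw [Submodule.mem_span_pair]
  constructor
  · rintro ⟨a, b, rfl⟩
    simp [e2, e3]
  · intro h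
    exact ⟨v 1, v 2, by conv_rhs => rw [eq_smul_e1_add_smul_e2_add_smul_e3 v, h, zero_smul, zero_add]⟩

lemma apply_eq_of_map_e1_eq_zero {d : V3 →ₗ[ℂ] V3} (h1 : d e1 = 0) (v : V3) :
    d v = v 1 • d e2 + v 2 • d e3 := by
  conv_lhs => rw [eq_smul_e1_add_smul_e2_add_smul_e3 v]
  simp [h1]

lemma d1_apply (v : V3) : d1 v = ![0, v 1, 0] := by
  change Matrix.mulVec _ v = _
  funext k; fin_cases k <;> simp [Matrix.mulVec, dotProduct, Fin.sum_univ_three]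

lemma d2_apply (v : V3) : d2 v = ![0, 0, v 2] := by
  change Matrix.mulVec _ v = _
  funext k; fin_cases k <;> simp [Matrix.mulVec, dotProduct, Fin.sum_univ_three]

lemma d3_apply (v : V3) : d3 v = ![0, 0, v 1] := by
  change Matrix.mulVec _ v = _
  funext k; fin_cases k <;> simp [Matrix.mulVec, dotProduct, Fin.sum_univ_three]

lemma d4_apply (v : V3) : d4 v = ![0, v 2, 0] := by
  change Matrix.mulVec _ v = _
  funext k; fin_cases k <;> simp [Matrix.mulVec, dotProduct, Fin.sum_univ_three]

lemma combination_d_apply (a b c f : ℂ) (v : V3) :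
    (a • d1 + b • d2 + c • d3 + f • d4) v = ![0, a * v 1 + f * v 2, b * v 2 + c * v 1] := by
  funext k; fin_cases k <;> simp [d1_apply, d2_apply, d3_apply, d4_apply] <;> ring

def derivationsA1 : Submodule ℂ (V3 →ₗ[ℂ] V3) where
  carrier := {d | IsDerA1 d}
  zero_mem' x y := by simp
  add_mem' {d d'} hd hd' x y := by
    simp only [LinearMap.add_apply, map_add, hd x y, hd' x y]
    abel
  smul_mem' a d hd x y := by
    simp only [LinearMap.smul_apply, map_smul, hd x y, smul_add]

lemma IsDerA1.map_e1 {d : V3 →ₗ[ℂ] V3} (hd : IsDerA1 d) : d e1 = 0 := by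
  have h := hd e1 e1
  rw [A1mul_e1_left, A1mul_e1_left, A1mul_e1_right] at h
  simpa using h

lemma IsDerA1.map_mem_span_e2_e3 {d : V3 →ₗ[ℂ] V3} (hd : IsDerA1 d) {v : V3}
    (hv : v ∈ Submodule.span ℂ {e2, e3}) : d v ∈ Submodule.span ℂ {e2, e3} := by
  rw [mem_span_e2_e3_iff] at hv ⊢
  by_cases hv0 : v = 0
  · simp [hv0]
  have hvv : A1mul v v = 0 := by
    funext k; fin_cases k <;> simp [A1mul_apply, hv]
  have hLeibniz : A1mul (d v) v + A1mul v (d v) = (2 * d v 0) • v := by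
    funext k; fin_cases k <;> simp [A1mul_apply, hv] <;> ring
  have h := hd v v
  rw [hvv, map_zero, hLeibniz, eq_comm, smul_eq_zero] at h
  simpa [hv0] using h

lemma IsDerA1.map_basis {d : V3 →ₗ[ℂ] V3} (hd : IsDerA1 d) :
    d e1 = 0 ∧ d e2 ∈ Submodule.span ℂ {e2, e3} ∧ d e3 ∈ Submodule.span ℂ {e2, e3} :=
  ⟨hd.map_e1, hd.map_mem_span_e2_e3 (Submodule.subset_span (by simp)),
    hd.map_mem_span_e2_e3 (Submodule.subset_span (by simp))⟩

lemma isDerA1_of_mem_d1_d2_d3_d4 {d : V3 →ₗ[ℂ] V3} (hd : d ∈ ({d1, d2, d3, d4} : Set _)) :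
    IsDerA1 d := by
  rcases hd with rfl | rfl | rfl | rfl <;> intro x y <;> funext k <;> fin_cases k <;>
    simp [A1mul_apply, d1_apply, d2_apply, d3_apply, d4_apply] <;> ring

lemma span_d_le_derivationsA1 : Submodule.span ℂ {d1, d2, d3, d4} ≤ derivationsA1 :=
  Submodule.span_le.mpr fun _ => isDerA1_of_mem_d1_d2_d3_d4

lemma mem_span_d_of_map_e1_eq_zero {d : V3 →ₗ[ℂ] V3} (h1 : d e1 = 0)
    (h2 : d e2 ∈ Submodule.span ℂ {e2, e3}) (h3 : d e3 ∈ Submodule.span ℂ {e2, e3}) :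
    d ∈ Submodule.span ℂ {d1, d2, d3, d4} := by
  rw [mem_span_e2_e3_iff] at h2 h3
  have hd : d = d e2 1 • d1 + d e3 2 • d2 + d e2 2 • d3 + d e3 1 • d4 := by
    refine LinearMap.ext fun v => ?_
    rw [apply_eq_of_map_e1_eq_zero h1, combination_d_apply]
    funext k; fin_cases k <;> simp [h2, h3] <;> ring
  rw [hd]
  refine add_mem (add_mem (add_mem ?_ ?_) ?_) ?_ <;>
    exact Submodule.smul_mem _ _ (Submodule.subset_span (by simp))

lemma linearIndependent_d : LinearIndependent ℂ ![d1, d2, d3, d4] := by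
  rw [Fintype.linearIndependent_iff]
  intro g hg
  rw [Fin.sum_univ_four] at hg
  have h2 := congrArg (fun d => d e2) hg
  have h3 := congrArg (fun d => d e3) hg
  simp only [Matrix.cons_val] at h2 h3
  rw [combination_d_apply] at h2 h3
  intro i
  fin_cases i
  · simpa [e2] using congrFun h2 1
  · simpa [e3] using congrFun h3 2
  · simpa [e2] using congrFun h2 2
  · simpa [e3] using congrFun h3 1

lemma finrank_span_d : Module.finrank ℂ (Submodule.span ℂ {d1, d2, d3, d4}) = 4 := by
  rw [show ({d1, d2, d3, d4} : Set (V3 →ₗ[ℂ] V3)) = Set.range ![d1, d2, d3, d4] by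
      simp only [Matrix.range_cons, Matrix.range_empty, Set.union_empty, Set.singleton_union],
    finrank_span_eq_card linearIndependent_d, Fintype.card_fin]

theorem derivations_of_A1 :
    (∀ d : V3 →ₗ[ℂ] V3, IsDerA1 d ↔
      (d e1 = 0 ∧ d e2 ∈ Submodule.span ℂ {e2, e3} ∧ d e3 ∈ Submodule.span ℂ {e2, e3})) ∧
    (∀ d : V3 →ₗ[ℂ] V3, IsDerA1 d ↔ d ∈ Submodule.span ℂ {d1, d2, d3, d4}) ∧
    Module.finrank ℂ (Submodule.span ℂ {d1, d2, d3, d4} : Submodule ℂ (V3 →ₗ[ℂ] V3)) = 4 := by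
  have isDerA1_of_mem_span {d} (hd : d ∈ Submodule.span ℂ {d1, d2, d3, d4}) : IsDerA1 d :=
    span_d_le_derivationsA1 hd
  have mem_span_of_isDerA1 {d} (hd : IsDerA1 d) : d ∈ Submodule.span ℂ {d1, d2, d3, d4} := by
    obtain ⟨h1, h2, h3⟩ := hd.map_basis
    exact mem_span_d_of_map_e1_eq_zero h1 h2 h3
  exact ⟨fun d => ⟨IsDerA1.map_basis,
      fun ⟨h1, h2, h3⟩ => isDerA1_of_mem_span (mem_span_d_of_map_e1_eq_zero h1 h2 h3)⟩,
    fun d => ⟨mem_span_of_isDerA1, isDerA1_of_mem_span⟩, finrank_span_d⟩
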